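/- The holomorphic 1-form dz/z^{d+2} fails to have finite weighted L² norm on the punctured disk: ∫_{0<|z|<1} |z|^{-2(d+2)} · |z|^{2d} · (log(2+|z|^{-2d}))^{-2} dA(z) = ∞. -/

import Mathlib

/-!
Since `log (2 + r⁻ⁿ) ≤ (n + 2) / r` on `(0, 1]`, the logarithmic weight costs at most a factor
`r²`, so the integrand `r⁻⁴ · log (2 + r⁻²ᵈ)⁻²` dominates a multiple of `r⁻²`. In the plane
`‖z‖⁻²` is not integrable near the origin: in polar coordinates it becomes `r · r⁻² = r⁻¹`.
-/

open MeasureTheory Metric Module Set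

section HaarBall

variable {E : Type*} [NormedAddCommGroup E] [NormedSpace ℝ E] [FiniteDimensional ℝ E]
  [MeasurableSpace E] [BorelSpace E] [Nontrivial E] (μ : Measure E) [μ.IsAddHaarMeasure]

theorem not_integrableOn_ball_norm_rpow_neg_finrank {r : ℝ} (hr : 0 < r) :
    ¬ IntegrableOn (fun x : E ↦ ‖x‖ ^ (-(finrank ℝ E : ℝ))) (ball 0 r) μ := by
  rw [integrableOn_fun_norm_addHaar μ (f := fun y ↦ y ^ (-(finrank ℝ E : ℝ)))]
  intro h
  have hinv : IntegrableOn (fun y : ℝ ↦ y ^ (-1 : ℝ)) (Ioo 0 r) := by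
    refine h.congr_fun (fun y hy ↦ ?_) measurableSet_Ioo
    have hdim : 1 ≤ finrank ℝ E := finrank_pos
    dsimp only
    rw [smul_eq_mul, ← Real.rpow_natCast, ← Real.rpow_add hy.1]
    push_cast [hdim]
    ring_nf
  exact lt_irrefl _ ((intervalIntegral.integrableOn_Ioo_rpow_iff hr).1 hinv)

theorem lintegral_ball_norm_rpow_neg_finrank {r : ℝ} (hr : 0 < r) :
    ∫⁻ x in ball 0 r, ENNReal.ofReal (‖x‖ ^ (-(finrank ℝ E : ℝ))) ∂μ = ⊤ := by
  by_contra h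
  refine not_integrableOn_ball_norm_rpow_neg_finrank μ hr ?_
  refine (lintegral_ofReal_ne_top_iff_integrable ?_ ?_).1 h
  · exact (continuous_norm.measurable.pow_const _).aestronglyMeasurable
  · exact ae_of_all _ fun x ↦ Real.rpow_nonneg (norm_nonneg x) _

end HaarBall

theorem Real.log_two_add_inv_pow_le (n : ℕ) {r : ℝ} (h0 : 0 < r) (h1 : r ≤ 1) :
    Real.log (2 + (r ^ n)⁻¹) ≤ (n + 2) / r := by
  have hinv : 1 ≤ r⁻¹ := (one_le_inv₀ h0).2 h1
  have hpow : 1 ≤ r⁻¹ ^ n := one_le_pow₀ hinv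
  have hlog3 : Real.log 3 ≤ 2 / r := by
    have := Real.log_le_sub_one_of_pos (show (0 : ℝ) < 3 by norm_num)
    rw [div_eq_mul_inv]
    nlinarith
  have hlogr : Real.log r⁻¹ ≤ r⁻¹ := by linarith [Real.log_le_sub_one_of_pos (inv_pos.2 h0)]
  calc Real.log (2 + (r ^ n)⁻¹) ≤ Real.log (3 * r⁻¹ ^ n) := by
        rw [← inv_pow]
        exact Real.log_le_log (by positivity) (by linarith)
    _ = Real.log 3 + n * Real.log r⁻¹ := by
        rw [Real.log_mul (by norm_num) (by positivity), Real.log_pow]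
    _ ≤ 2 / r + n * r⁻¹ := by gcongr
    _ = (n + 2) / r := by ring

/-- The integrand at `‖z‖ = r`: the squared norm of `dz / z^(d+2)` times the weight. -/
noncomputable def weightedDensity (d : ℕ) (r : ℝ) : ℝ :=
  r ^ (-2 * ((d : ℤ) + 2)) * r ^ (2 * (d : ℤ)) * ((Real.log (2 + r ^ (-2 * (d : ℤ))))⁻¹) ^ 2

theorem weightedDensity_eq (d : ℕ) {r : ℝ} (hr : 0 < r) :
    weightedDensity d r = (r ^ 4)⁻¹ * ((Real.log (2 + (r ^ (2 * d))⁻¹))⁻¹) ^ 2 := by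
  have hsum : r ^ (-2 * ((d : ℤ) + 2)) * r ^ (2 * (d : ℤ)) = (r ^ 4)⁻¹ := by
    rw [← zpow_add₀ hr.ne', show -2 * ((d : ℤ) + 2) + 2 * d = -(4 : ℕ) by ring, zpow_neg,
      zpow_natCast]
  have hneg : r ^ (-2 * (d : ℤ)) = (r ^ (2 * d))⁻¹ := by
    rw [show -2 * (d : ℤ) = -(2 * d : ℕ) by push_cast; ring, zpow_neg, zpow_natCast]
  rw [weightedDensity, hsum, hneg]

theorem mul_rpow_neg_two_le_weightedDensity (d : ℕ) {r : ℝ} (h0 : 0 < r) (h1 : r ≤ 1) :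
    ((2 * d + 2) ^ 2 : ℝ)⁻¹ * r ^ (-2 : ℝ) ≤ weightedDensity d r := by
  set L := Real.log (2 + (r ^ (2 * d))⁻¹)
  have hL0 : 0 < L := Real.log_pos (by linarith [inv_pos.2 (pow_pos h0 (2 * d))])
  have hL : L ≤ (2 * d + 2) / r := by
    simpa using Real.log_two_add_inv_pow_le (2 * d) h0 h1
  have hLinv : r / (2 * d + 2) ≤ L⁻¹ := by
    rw [← inv_div]
    exact inv_anti₀ hL0 hL
  rw [weightedDensity_eq d h0, Real.rpow_neg h0.le, Real.rpow_two]
  calc ((2 * d + 2) ^ 2 : ℝ)⁻¹ * (r ^ 2)⁻¹ = (r ^ 4)⁻¹ * (r / (2 * d + 2)) ^ 2 := by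
        field_simp
    _ ≤ (r ^ 4)⁻¹ * L⁻¹ ^ 2 := by gcongr

theorem stmt12_general (d : ℕ) :
    ∫⁻ z in {z : ℂ | 0 < ‖z‖ ∧ ‖z‖ < 1},
      ENNReal.ofReal (‖z‖ ^ (-2*((d:ℤ)+2)) * ‖z‖ ^ (2*(d:ℤ)) *
        ((Real.log (2 + ‖z‖ ^ (-2*(d:ℤ))))⁻¹) ^ 2) = ⊤ := by
  set c : ℝ := ((2 * d + 2) ^ 2 : ℝ)⁻¹
  have hc : 0 < c := by positivity
  have hS : {z : ℂ | 0 < ‖z‖ ∧ ‖z‖ < 1} = ball 0 1 \ {0} := by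
    ext z
    simp [norm_pos_iff, and_comm]
  have hplane : ∫⁻ z in ball (0 : ℂ) 1 \ {0}, ENNReal.ofReal (‖z‖ ^ (-2 : ℝ)) = ⊤ := by
    rw [setLIntegral_congr (sdiff_null_ae_eq_self (measure_singleton 0))]
    simpa [Complex.finrank_real_complex] using
      lintegral_ball_norm_rpow_neg_finrank (E := ℂ) volume one_pos
  have hbound : ∀ z ∈ ball (0 : ℂ) 1 \ {0},
      ENNReal.ofReal c * ENNReal.ofReal (‖z‖ ^ (-2 : ℝ)) ≤
        ENNReal.ofReal (weightedDensity d ‖z‖) := by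
    rintro z ⟨hz1, hz0⟩
    rw [← ENNReal.ofReal_mul hc.le]
    exact ENNReal.ofReal_le_ofReal <| mul_rpow_neg_two_le_weightedDensity d
      (norm_pos_iff.2 hz0) (mem_ball_zero_iff.1 hz1).le
  rw [hS, eq_top_iff, ← ENNReal.mul_top (ENNReal.ofReal_pos.2 hc).ne', ← hplane,
    ← lintegral_const_mul' _ _ ENNReal.ofReal_ne_top]
  exact setLIntegral_mono' (measurableSet_ball.diff (measurableSet_singleton 0)) hbound

theorem stmt12 (d : ℕ) (hd : 1 ≤ d) :
    ∫⁻ z in {z : ℂ | 0 < ‖z‖ ∧ ‖z‖ < 1},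
      ENNReal.ofReal (‖z‖ ^ (-2*((d:ℤ)+2)) * ‖z‖ ^ (2*(d:ℤ)) *
        ((Real.log (2 + ‖z‖ ^ (-2*(d:ℤ))))⁻¹) ^ 2) = ⊤ :=
  stmt12_general d
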